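/- arXiv:1906.06800 — 2 statements merged into one kernel-verified Lean document; each statement's English description precedes it below -/
import Mathlib

section
/- For every pair μ, ν of idempotent probability measures on a compact metric space (X, ρ), the infimum in the definition of ρ_I is attained: there exists λ_{μν} ∈ Λ(μ, ν) with ρ_I(μ, ν) = sup{ ρ(x, y) : (x, y) ∈ supp λ_{μν} }. -/
/-- An idempotent probability measure on `X`: a functional on `C(X, ℝ)` preserving constants,
shifting under addition of constants, and turning pointwise max into max. -/
def IsIPM (X : Type*) [TopologicalSpace X] (μ : C(X, ℝ) → ℝ) : Prop :=
  (∀ c : ℝ, μ (ContinuousMap.const X c) = c) ∧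
  (∀ (φ : C(X, ℝ)) (c : ℝ), μ (φ + ContinuousMap.const X c) = μ φ + c) ∧
  (∀ φ ψ : C(X, ℝ), μ (φ ⊔ ψ) = max (μ φ) (μ ψ))


/-- Pushforward of a functional along a continuous map: `I(f)(μ)(φ) = μ(φ ∘ f)`. -/
def IPMmap {X Y : Type*} [TopologicalSpace X] [TopologicalSpace Y]
    (f : C(X, Y)) (μ : C(X, ℝ) → ℝ) : C(Y, ℝ) → ℝ :=
  fun φ => μ (φ.comp f)


/-- The support of `μ`: intersection of all closed `A ⊆ X` such that `μ` comes from an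
idempotent probability measure on `A`. -/
def IPMsupp {X : Type*} [TopologicalSpace X] (μ : C(X, ℝ) → ℝ) : Set X :=
  ⋂₀ {A : Set X | IsClosed A ∧ ∃ ν : C(A, ℝ) → ℝ, IsIPM A ν ∧
      ∀ φ : C(X, ℝ), μ φ = ν (φ.restrict A)}

/-- The set `Λ(μ₁, μ₂)` of admissible measures on `X × X` with marginals `μ₁`, `μ₂`. -/
def AdmSet {X : Type*} [TopologicalSpace X] (μ₁ μ₂ : C(X, ℝ) → ℝ) :
    Set (C(X × X, ℝ) → ℝ) :=
  {ξ | IsIPM (X × X) ξ ∧ IPMmap ContinuousMap.fst ξ = μ₁ ∧ IPMmap ContinuousMap.snd ξ = μ₂}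

/-- `ρ_I(μ₁, μ₂) = inf { sup { d(x,y) : (x,y) ∈ supp ξ } : ξ ∈ Λ(μ₁, μ₂) }`,
with respect to a distance function `d` on `X`. -/
noncomputable def rhoID {X : Type*} [TopologicalSpace X] (d : X → X → ℝ)
    (μ₁ μ₂ : C(X, ℝ) → ℝ) : ℝ :=
  sInf ((fun ξ => sSup ((fun p : X × X => d p.1 p.2) '' IPMsupp ξ)) '' AdmSet μ₁ μ₂)

section Aux
variable {Z : Type*} [TopologicalSpace Z] {ξ : C(Z, ℝ) → ℝ}

theorem IsIPM.mono (h : IsIPM Z ξ) {φ ψ : C(Z, ℝ)} (hle : φ ≤ ψ) : ξ φ ≤ ξ ψ := by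
  have h2 := h.2.2 φ ψ
  rw [sup_eq_right.2 hle] at h2
  rw [h2]; exact le_max_left _ _

theorem IsIPM.le_add_const (h : IsIPM Z ξ) {φ ψ : C(Z, ℝ)} {c : ℝ}
    (hle : ∀ z, φ z ≤ ψ z + c) : ξ φ ≤ ξ ψ + c := by
  have : φ ≤ ψ + ContinuousMap.const Z c := ContinuousMap.le_def.2 fun z => hle z
  calc ξ φ ≤ ξ (ψ + ContinuousMap.const Z c) := h.mono this
    _ = ξ ψ + c := h.2.1 ψ c

theorem IsIPM.abs_le_norm [CompactSpace Z] (h : IsIPM Z ξ) (φ : C(Z, ℝ)) : |ξ φ| ≤ ‖φ‖ := by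
  have h1 : ξ φ ≤ 0 + ‖φ‖ := by
    have := h.le_add_const (ψ := ContinuousMap.const Z 0) (c := ‖φ‖) (φ := φ) ?_
    · rw [h.1 0] at this; exact this
    · intro z
      simpa using (le_abs_self (φ z)).trans (φ.norm_coe_le_norm z)
  have h2 : ξ (ContinuousMap.const Z 0) ≤ ξ φ + ‖φ‖ := by
    apply h.le_add_const
    intro z
    simp only [ContinuousMap.const_apply]
    have := (neg_abs_le (φ z)).trans' (neg_le_neg (φ.norm_coe_le_norm z))
    linarith [φ.norm_coe_le_norm z, neg_abs_le (φ z)]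
  rw [h.1 0] at h2
  rw [abs_le]; constructor <;> linarith

end Aux

/-- `ξ` factors through the closed set `A`. -/
def LivesOn {Z : Type*} [TopologicalSpace Z] (ξ : C(Z, ℝ) → ℝ) (A : Set Z) : Prop :=
  ∀ φ ψ : C(Z, ℝ), (∀ z ∈ A, φ z = ψ z) → ξ φ = ξ ψ

section LivesOn
variable {Z : Type*} [TopologicalSpace Z] {ξ : C(Z, ℝ) → ℝ} {A B : Set Z}

theorem LivesOn.mono (h : LivesOn ξ A) (hAB : A ⊆ B) : LivesOn ξ B :=
  fun φ ψ hag => h φ ψ fun z hz => hag z (hAB hz)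

theorem LivesOn.le_add (hξ : IsIPM Z ξ) (h : LivesOn ξ A) {φ ψ : C(Z, ℝ)} {c : ℝ}
    (hle : ∀ z ∈ A, φ z ≤ ψ z + c) : ξ φ ≤ ξ ψ + c := by
  set χ := φ ⊔ (ψ + ContinuousMap.const Z c) with hχ
  have h1 : ξ χ = ξ ψ + c := by
    rw [h χ (ψ + ContinuousMap.const Z c) ?_, hξ.2.1]
    intro z hz
    simp only [hχ, ContinuousMap.sup_apply, ContinuousMap.add_apply,
      ContinuousMap.const_apply]
    exact max_eq_right (hle z hz)
  have h2 : ξ φ ≤ ξ χ := hξ.mono le_sup_left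
  linarith

theorem livesOn_univ (ξ : C(Z, ℝ) → ℝ) : LivesOn ξ (Set.univ : Set Z) :=
  fun φ ψ hag => by rw [ContinuousMap.ext fun z => hag z trivial]

theorem LivesOn.inter [CompactSpace Z] [NormalSpace Z] (hξ : IsIPM Z ξ)
    (hA : IsClosed A) (hB : IsClosed B) (hlA : LivesOn ξ A) (hlB : LivesOn ξ B) :
    LivesOn ξ (A ∩ B) := by
  suffices key : ∀ φ ψ : C(Z, ℝ), (∀ z ∈ A ∩ B, φ z = ψ z) → ξ φ ≤ ξ ψ by
    intro φ ψ hag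
    exact le_antisymm (key φ ψ hag) (key ψ φ fun z hz => (hag z hz).symm)
  intro φ ψ hag
  refine le_of_forall_pos_le_add fun ε hε => ?_
  set U := {z | φ z < ψ z + ε} with hU
  have hUopen : IsOpen U := isOpen_lt φ.continuous (ψ.continuous.add continuous_const)
  have hABU : A ∩ B ⊆ U := fun z hz => by
    simp only [hU, Set.mem_setOf_eq, hag z hz]; linarith
  set C := A ∩ Uᶜ with hC
  have hCclosed : IsClosed C := hA.inter hUopen.isClosed_compl
  have hdisj : Disjoint B C := by
    rw [Set.disjoint_right]
    rintro z ⟨hzA, hzU⟩ hzB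
    exact hzU (hABU ⟨hzA, hzB⟩)
  obtain ⟨g, hg0, hg1, hg01⟩ := exists_continuous_zero_one_of_isClosed hB hCclosed hdisj
  set M := ‖φ‖ + ‖ψ‖ with hM
  have hM0 : 0 ≤ M := add_nonneg (norm_nonneg _) (norm_nonneg _)
  set φ' := φ - (M : ℝ) • g with hφ'
  have hφ'B : ξ φ' = ξ φ := by
    apply hlB
    intro z hz
    simp [hφ', hg0 hz]
  have hφ'A : ∀ z ∈ A, φ' z ≤ ψ z + ε := by
    intro z hzA
    by_cases hzU : z ∈ U
    · have : φ z < ψ z + ε := hzU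
      have hgz : 0 ≤ g z := (hg01 z).1
      simp only [hφ', ContinuousMap.sub_apply, ContinuousMap.smul_apply, smul_eq_mul]
      nlinarith
    · have hzC : z ∈ C := ⟨hzA, hzU⟩
      have hgz : g z = 1 := hg1 hzC
      simp only [hφ', ContinuousMap.sub_apply, ContinuousMap.smul_apply, smul_eq_mul, hgz,
        mul_one, hM]
      have h1 : φ z ≤ ‖φ‖ := (le_abs_self _).trans (φ.norm_coe_le_norm z)
      have h2 : -‖ψ‖ ≤ ψ z := by
        have h3 : |ψ z| ≤ ‖ψ‖ := by simpa [Real.norm_eq_abs] using ψ.norm_coe_le_norm z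
        linarith [neg_abs_le (ψ z)]
      linarith
  have := hlA.le_add hξ hφ'A
  rw [hφ'B] at this
  exact this

end LivesOn

section Supp
variable {Z : Type*} [TopologicalSpace Z] {ξ : C(Z, ℝ) → ℝ} {A : Set Z}

/-- Members of the defining family of the support factor `ξ`. -/
theorem livesOn_of_mem_fam
    (h : ∃ ν : C(A, ℝ) → ℝ, IsIPM A ν ∧ ∀ φ : C(Z, ℝ), ξ φ = ν (φ.restrict A)) :
    LivesOn ξ A := by
  obtain ⟨ν, -, hν⟩ := h
  intro φ ψ hag
  rw [hν φ, hν ψ]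
  congr 1
  ext ⟨z, hz⟩
  simpa using hag z hz

/-- Tietze: a closed set on which `ξ` lives belongs to the defining family. -/
theorem mem_fam_of_livesOn [NormalSpace Z] (hξ : IsIPM Z ξ) (hA : IsClosed A)
    (hl : LivesOn ξ A) :
    ∃ ν : C(A, ℝ) → ℝ, IsIPM A ν ∧ ∀ φ : C(Z, ℝ), ξ φ = ν (φ.restrict A) := by
  have ext : ∀ ψ : C(A, ℝ), ∃ g : C(Z, ℝ), g.restrict A = ψ := fun ψ =>
    ContinuousMap.exists_restrict_eq hA ψ
  choose E hE using ext
  have hEA : ∀ (ψ : C(A, ℝ)) (z : Z) (hz : z ∈ A), E ψ z = ψ ⟨z, hz⟩ := by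
    intro ψ z hz
    have := ContinuousMap.congr_fun (hE ψ) ⟨z, hz⟩
    simpa using this
  refine ⟨fun ψ => ξ (E ψ), ⟨?_, ?_, ?_⟩, ?_⟩
  · intro c
    show ξ (E (ContinuousMap.const A c)) = c
    rw [hl (E (ContinuousMap.const A c)) (ContinuousMap.const Z c) ?_, hξ.1]
    intro z hz; simp [hEA _ z hz]
  · intro ψ c
    show ξ (E (ψ + ContinuousMap.const A c)) = ξ (E ψ) + c
    rw [hl (E (ψ + ContinuousMap.const A c)) (E ψ + ContinuousMap.const Z c) ?_, hξ.2.1]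
    intro z hz; simp [hEA _ z hz]
  · intro ψ₁ ψ₂
    show ξ (E (ψ₁ ⊔ ψ₂)) = max (ξ (E ψ₁)) (ξ (E ψ₂))
    rw [hl (E (ψ₁ ⊔ ψ₂)) (E ψ₁ ⊔ E ψ₂) ?_, hξ.2.2]
    intro z hz; simp [hEA _ z hz]
  · intro φ
    apply hl
    intro z hz
    simp [hEA _ z hz]

theorem isClosed_supp (ξ : C(Z, ℝ) → ℝ) : IsClosed (IPMsupp ξ) :=
  isClosed_sInter fun _ hA => hA.1

/-- The key fact: `ξ` lives on its support. -/
theorem livesOn_supp [CompactSpace Z] [NormalSpace Z] (hξ : IsIPM Z ξ) :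
    LivesOn ξ (IPMsupp ξ) := by
  set Fam := {A : Set Z | IsClosed A ∧ ∃ ν : C(A, ℝ) → ℝ, IsIPM A ν ∧
      ∀ φ : C(Z, ℝ), ξ φ = ν (φ.restrict A)} with hFam
  suffices key : ∀ φ ψ : C(Z, ℝ), (∀ z ∈ IPMsupp ξ, φ z = ψ z) → ξ φ ≤ ξ ψ by
    intro φ ψ hag
    exact le_antisymm (key φ ψ hag) (key ψ φ fun z hz => (hag z hz).symm)
  intro φ ψ hag
  refine le_of_forall_pos_le_add fun ε hε => ?_
  set U := {z | φ z < ψ z + ε} with hU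
  have hUopen : IsOpen U := isOpen_lt φ.continuous (ψ.continuous.add continuous_const)
  have hsuppU : IPMsupp ξ ⊆ U := fun z hz => by
    simp only [hU, Set.mem_setOf_eq, hag z hz]; linarith
  -- compactness: finitely many members of the family suffice
  have hUc : IsCompact (Uᶜ : Set Z) := hUopen.isClosed_compl.isCompact
  have hempty : (Uᶜ ∩ ⋂ (A : Fam), (A : Set Z)) = ∅ := by
    rw [← Set.sInter_eq_iInter]
    apply Set.eq_empty_of_forall_notMem
    rintro z ⟨hz1, hz2⟩
    exact hz1 (hsuppU hz2)
  obtain ⟨t, ht⟩ := hUc.elim_finite_subfamily_closed (fun A : Fam => (A : Set Z))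
    (fun A => A.2.1) hempty
  have hAU : (⋂ A ∈ t, (A : Set Z)) ⊆ U := by
    intro z hz
    by_contra hzU
    exact Set.eq_empty_iff_forall_notMem.1 ht z ⟨hzU, hz⟩
  have hAgood : ∀ s : Finset Fam,
      IsClosed (⋂ A ∈ s, (A : Set Z)) ∧ LivesOn ξ (⋂ A ∈ s, (A : Set Z)) := by
    classical
    intro s
    induction s using Finset.induction_on with
    | empty =>
      simp only [Finset.notMem_empty, Set.iInter_of_empty, Set.iInter_univ]
      exact ⟨isClosed_univ, livesOn_univ ξ⟩
    | @insert a s hnot ih =>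
      rw [Finset.set_biInter_insert]
      obtain ⟨ha1, ha2⟩ := a.2
      exact ⟨IsClosed.inter ha1 ih.1,
        LivesOn.inter hξ ha1 ih.1 (livesOn_of_mem_fam ha2) ih.2⟩
  refine (hAgood t).2.le_add hξ fun z hz => ?_
  exact le_of_lt (hAU hz)

end Supp

section Prod
variable {X : Type*} [MetricSpace X] [CompactSpace X] {μ ν : C(X, ℝ) → ℝ}

theorem IsIPM.lipschitz (hν : IsIPM X ν) : LipschitzWith 1 ν := by
  apply LipschitzWith.of_dist_le_mul
  intro f g
  rw [NNReal.coe_one, one_mul, Real.dist_eq, abs_sub_le_iff]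
  constructor
  · have : ν f ≤ ν g + dist f g := hν.le_add_const fun z => by
      have h := ContinuousMap.dist_apply_le_dist (f := f) (g := g) z
      rw [Real.dist_eq] at h
      linarith [le_abs_self (f z - g z)]
    linarith
  · have : ν g ≤ ν f + dist f g := hν.le_add_const fun z => by
      have h := ContinuousMap.dist_apply_le_dist (f := f) (g := g) z
      rw [Real.dist_eq] at h
      linarith [neg_abs_le (f z - g z)]
    linarith [dist_comm f g]

theorem admSet_nonempty (hμ : IsIPM X μ) (hν : IsIPM X ν) : (AdmSet μ ν).Nonempty := by
  set inner : C(X × X, ℝ) → C(X, ℝ) := fun Φ =>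
    ⟨fun x => ν (Φ.curry x), hν.lipschitz.continuous.comp Φ.curry.continuous⟩ with hinner
  have happ : ∀ (Φ : C(X × X, ℝ)) (x : X), inner Φ x = ν (Φ.curry x) := fun _ _ => rfl
  refine ⟨fun Φ => μ (inner Φ), ⟨?_, ?_, ?_⟩, ?_, ?_⟩
  · intro c
    have : inner (ContinuousMap.const (X × X) c) = ContinuousMap.const X c := by
      ext x
      rw [happ]
      have : (ContinuousMap.const (X × X) c).curry x = ContinuousMap.const X c := by
        ext y; simp [ContinuousMap.curry_apply]
      simp [this, hν.1]
    show μ (inner (ContinuousMap.const (X × X) c)) = c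
    rw [this, hμ.1]
  · intro Φ c
    have : inner (Φ + ContinuousMap.const (X × X) c) = inner Φ + ContinuousMap.const X c := by
      ext x
      rw [ContinuousMap.add_apply, happ, happ]
      have : (Φ + ContinuousMap.const (X × X) c).curry x =
          Φ.curry x + ContinuousMap.const X c := by
        ext y; simp [ContinuousMap.curry_apply]
      rw [this, hν.2.1]
      simp only [ContinuousMap.const_apply]
    show μ (inner (Φ + ContinuousMap.const (X × X) c)) = μ (inner Φ) + c
    rw [this, hμ.2.1]
  · intro Φ Ψ
    have : inner (Φ ⊔ Ψ) = inner Φ ⊔ inner Ψ := by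
      ext x
      rw [ContinuousMap.sup_apply, happ, happ, happ]
      have : (Φ ⊔ Ψ).curry x = Φ.curry x ⊔ Ψ.curry x := by
        ext y; simp [ContinuousMap.curry_apply]
      rw [this, hν.2.2]
    show μ (inner (Φ ⊔ Ψ)) = max (μ (inner Φ)) (μ (inner Ψ))
    rw [this, hμ.2.2]
  · funext φ
    show μ (inner (φ.comp ContinuousMap.fst)) = μ φ
    have : inner (φ.comp ContinuousMap.fst) = φ := by
      ext x
      rw [happ]
      have : (φ.comp ContinuousMap.fst).curry x = ContinuousMap.const X (φ x) := by
        ext y; simp [ContinuousMap.curry_apply]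
      rw [this, hν.1]
    rw [this]
  · funext φ
    show μ (inner (φ.comp ContinuousMap.snd)) = ν φ
    have : inner (φ.comp ContinuousMap.snd) = ContinuousMap.const X (ν φ) := by
      ext x
      rw [happ]
      have : (φ.comp ContinuousMap.snd).curry x = φ := by
        ext y; simp [ContinuousMap.curry_apply]
      rw [this]
      simp
    rw [this, hμ.1]

end Prod

/-- The infimum in the definition of `ρ_I` is attained by some admissible measure. -/
theorem rhoI_attained {X : Type*} [MetricSpace X] [CompactSpace X]
    (μ ν : C(X, ℝ) → ℝ) (hμ : IsIPM X μ) (hν : IsIPM X ν) :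
    ∃ ξ ∈ AdmSet μ ν,
      rhoID (fun x y : X => dist x y) μ ν =
        sSup ((fun p : X × X => dist p.1 p.2) '' IPMsupp ξ) := by
  classical
  set F : (C(X × X, ℝ) → ℝ) → ℝ :=
    fun ξ => sSup ((fun p : X × X => dist p.1 p.2) '' IPMsupp ξ) with hF
  set S : Set ℝ := F '' AdmSet μ ν with hS
  have hrho : rhoID (fun x y : X => dist x y) μ ν = sInf S := rfl
  set r := sInf S with hr
  -- basic facts
  have hSne : S.Nonempty := (admSet_nonempty hμ hν).image F
  have hF0 : ∀ ξ, 0 ≤ F ξ :=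
    fun ξ => Real.sSup_nonneg (by rintro y ⟨p, _, rfl⟩; exact dist_nonneg)
  have hSbdd : BddBelow S := ⟨0, by rintro s ⟨ξ, -, rfl⟩; exact hF0 ξ⟩
  have hr0 : 0 ≤ r := le_csInf hSne (by rintro s ⟨ξ, -, rfl⟩; exact hF0 ξ)
  -- the compact sets K c
  set K : ℝ → Set (X × X) := fun c => {p | dist p.1 p.2 ≤ c} with hK
  have hKclosed : ∀ c, IsClosed (K c) := fun c => isClosed_le continuous_dist continuous_const
  have hKmono : ∀ {c c'}, c ≤ c' → K c ⊆ K c' := fun h p hp => le_trans hp h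
  -- closedness facts
  have hIPMclosed : IsClosed {ξ : C(X × X, ℝ) → ℝ | IsIPM (X × X) ξ} := by
    have : {ξ : C(X × X, ℝ) → ℝ | IsIPM (X × X) ξ} =
        (⋂ c : ℝ, {ξ : C(X × X, ℝ) → ℝ | ξ (ContinuousMap.const (X × X) c) = c}) ∩
        ((⋂ φ : C(X × X, ℝ), ⋂ c : ℝ,
            {ξ : C(X × X, ℝ) → ℝ | ξ (φ + ContinuousMap.const (X × X) c) = ξ φ + c}) ∩
         (⋂ φ : C(X × X, ℝ), ⋂ ψ : C(X × X, ℝ),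
            {ξ : C(X × X, ℝ) → ℝ | ξ (φ ⊔ ψ) = max (ξ φ) (ξ ψ)})) := by
      ext ξ; simp only [IsIPM, Set.mem_setOf_eq, Set.mem_inter_iff, Set.mem_iInter]
    rw [this]
    refine IsClosed.inter
      (isClosed_iInter fun c => isClosed_eq (continuous_apply _) continuous_const)
      (IsClosed.inter ?_ ?_)
    · exact isClosed_iInter fun φ => isClosed_iInter fun c =>
        isClosed_eq (continuous_apply _) ((continuous_apply _).add continuous_const)
    · exact isClosed_iInter fun φ => isClosed_iInter fun ψ =>
        isClosed_eq (continuous_apply _) ((continuous_apply φ).sup (continuous_apply ψ))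
  have hMargClosed : ∀ (f : C(X × X, X)) (m : C(X, ℝ) → ℝ),
      IsClosed {ξ : C(X × X, ℝ) → ℝ | IPMmap f ξ = m} := by
    intro f m
    have : {ξ : C(X × X, ℝ) → ℝ | IPMmap f ξ = m} =
        ⋂ φ : C(X, ℝ), {ξ : C(X × X, ℝ) → ℝ | ξ (φ.comp f) = m φ} := by
      ext ξ; simp only [Set.mem_setOf_eq, Set.mem_iInter, funext_iff]; rfl
    rw [this]
    exact isClosed_iInter fun φ => isClosed_eq (continuous_apply _) continuous_const
  have hAdmClosed : IsClosed (AdmSet μ ν) := by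
    have : AdmSet μ ν = {ξ : C(X × X, ℝ) → ℝ | IsIPM (X × X) ξ} ∩
        ({ξ : C(X × X, ℝ) → ℝ | IPMmap ContinuousMap.fst ξ = μ} ∩
         {ξ : C(X × X, ℝ) → ℝ | IPMmap ContinuousMap.snd ξ = ν}) := by
      ext ξ
      simp only [AdmSet, Set.mem_setOf_eq, Set.mem_inter_iff]
    rw [this]
    exact hIPMclosed.inter ((hMargClosed _ _).inter (hMargClosed _ _))
  have hAdmCompact : IsCompact (AdmSet μ ν) := by
    refine IsCompact.of_isClosed_subset
      (isCompact_univ_pi fun φ : C(X × X, ℝ) => isCompact_Icc (a := -‖φ‖) (b := ‖φ‖))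
      hAdmClosed ?_
    intro ξ hξ φ _
    exact abs_le.1 (hξ.1.abs_le_norm φ)
  have hLivesClosed : ∀ c, IsClosed {ξ : C(X × X, ℝ) → ℝ | LivesOn ξ (K c)} := by
    intro c
    have : {ξ : C(X × X, ℝ) → ℝ | LivesOn ξ (K c)} =
        ⋂ φ : C(X × X, ℝ), ⋂ ψ : C(X × X, ℝ), ⋂ _ : (∀ z ∈ K c, φ z = ψ z),
          {ξ : C(X × X, ℝ) → ℝ | ξ φ = ξ ψ} := by
      ext ξ; simp only [LivesOn, Set.mem_setOf_eq, Set.mem_iInter]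
    rw [this]
    exact isClosed_iInter fun φ => isClosed_iInter fun ψ => isClosed_iInter fun _ =>
      isClosed_eq (continuous_apply _) (continuous_apply _)
  -- relation between F and LivesOn on K c
  have hFleK : ∀ ξ, IsIPM (X × X) ξ → ∀ c : ℝ, 0 ≤ c → LivesOn ξ (K c) → F ξ ≤ c := by
    intro ξ hξ c hc hl
    obtain ⟨ν', hν'⟩ := mem_fam_of_livesOn hξ (hKclosed c) hl
    have hsub : IPMsupp ξ ⊆ K c := Set.sInter_subset_of_mem ⟨hKclosed c, ν', hν'⟩
    exact Real.sSup_le (by rintro y ⟨p, hp, rfl⟩; exact hsub hp) hc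
  have hdistF : ∀ ξ, ∀ p ∈ IPMsupp ξ, dist p.1 p.2 ≤ F ξ := by
    intro ξ p hp
    refine le_csSup ?_ (Set.mem_image_of_mem _ hp)
    exact ((isClosed_supp ξ).isCompact.image continuous_dist).bddAbove
  -- the decreasing sequence of compact sets
  set t : ℕ → Set (C(X × X, ℝ) → ℝ) :=
    fun n => AdmSet μ ν ∩ {ξ | LivesOn ξ (K (r + 1 / (n + 1)))} with ht
  have htclosed : ∀ n, IsClosed (t n) := fun n => hAdmClosed.inter (hLivesClosed _)
  have htsub : ∀ n, t (n + 1) ⊆ t n := by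
    intro n ξ hξ
    refine ⟨hξ.1, hξ.2.mono (hKmono ?_)⟩
    have h1 : (0 : ℝ) < (n : ℝ) + 1 := by positivity
    have h2 : (n : ℝ) + 1 ≤ (n : ℝ) + 1 + 1 := by linarith
    have := one_div_le_one_div_of_le h1 h2
    push_cast
    linarith
  have htne : ∀ n, (t n).Nonempty := by
    intro n
    have hlt : sInf S < r + 1 / (n + 1) := by
      have : (0 : ℝ) < 1 / ((n : ℝ) + 1) := by positivity
      rw [← hr]; linarith
    obtain ⟨s, hsS, hs⟩ := exists_lt_of_csInf_lt hSne hlt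
    obtain ⟨ξ, hξadm, rfl⟩ := hsS
    refine ⟨ξ, hξadm, (livesOn_supp hξadm.1).mono fun p hp => ?_⟩
    exact le_trans (hdistF ξ p hp) (le_of_lt hs)
  obtain ⟨ξ₀, hξ₀⟩ := IsCompact.nonempty_iInter_of_sequence_nonempty_isCompact_isClosed t
    htsub htne (IsCompact.of_isClosed_subset hAdmCompact (htclosed 0) Set.inter_subset_left)
    htclosed
  have hξ₀n : ∀ n, ξ₀ ∈ t n := Set.mem_iInter.1 hξ₀
  have hξ₀adm : ξ₀ ∈ AdmSet μ ν := (hξ₀n 0).1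
  have hFler : F ξ₀ ≤ r := by
    refine le_of_forall_pos_le_add fun ε hε => ?_
    obtain ⟨n, hn⟩ := exists_nat_one_div_lt hε
    have := hFleK ξ₀ hξ₀adm.1 (r + 1 / (n + 1)) (by positivity) (hξ₀n n).2
    linarith
  have hrleF : r ≤ F ξ₀ := csInf_le hSbdd ⟨ξ₀, hξ₀adm, rfl⟩
  exact ⟨ξ₀, hξ₀adm, by rw [hrho]; exact le_antisymm hrleF hFler⟩
end

section
/- Let f : (X, ρ_X) → (Y, ρ_Y) be a continuous map of compact metric spaces and μ, ν ∈ I(X) with an optimal admissible measure λ_{μν} realizing ρ_{X,I}(μ, ν). Then ρ_{Y,I}(I(f)(μ), I(f)(ν)) ≤ sup{ ρ_Y(f(x), f(y)) : (x, y) ∈ supp λ_{μν} }. Consequently, if f is (ε, δ)-uniformly continuous, then I(f) : (I(X), ρ_{X,I}) → (I(Y), ρ_{Y,I}) is (ε, δ)-uniformly continuous. -/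
/-! An idempotent probability measure on a compact space only sees its support: for every `φ`
and `ε > 0` some `x ∈ supp μ` satisfies `μ φ ≤ μ ψ + (φ x - ψ x) + ε` for all `ψ` (otherwise
finitely many competitors `ψ` would dominate `φ` while having smaller value). Hence `μ` descends to
an idempotent measure on its support, and `supp I(g)μ ⊆ g(supp μ)`.

For an admissible `λ` for `(μ, ν)`, the pushforward `I(f × f)λ` is admissible for
`(I(f)μ, I(f)ν)` and supported in `(f × f)(supp λ)`, which gives the estimate. For uniform
continuity, `Λ(μ, ν)` is nonempty (it contains `μ ⊗ ν`), so some `λ` has all distances on its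
compact support `< δ`; then all distances `ρ_Y(f x, f y)` there are `< ε`, and so is their
maximum. -/

open Set

theorem mem_IPMsupp_of_forall_le {X : Type*} [TopologicalSpace X] [T4Space X]
    {μ : C(X, ℝ) → ℝ} {x : X} {M : ℝ} (hM : ∀ ψ : C(X, ℝ), ψ x = 0 → M ≤ μ ψ) :
    x ∈ IPMsupp μ := by
  rintro A ⟨hA, ν, hν, hμν⟩
  by_contra hxA
  obtain ⟨u, hu0, hu1, -⟩ := exists_continuous_zero_one_of_isClosed hA isClosed_singleton
    (disjoint_singleton_right.2 hxA)
  -- `ψ` vanishes at `x` but equals `M - 1` on `A`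
  set ψ : C(X, ℝ) := (1 - M) • u + ContinuousMap.const X (M - 1)
  have hψA : ψ.restrict A = ContinuousMap.const A (M - 1) := by
    ext a
    simp [ψ, hu0 a.2]
  have := hM ψ (by simp [ψ, hu1 rfl])
  rw [hμν, hψA, hν.1] at this
  linarith

theorem isClosed_IPMsupp {X : Type*} [TopologicalSpace X] (μ : C(X, ℝ) → ℝ) :
    IsClosed (IPMsupp μ) :=
  isClosed_sInter fun _ hA => hA.1

namespace IsIPM

variable {X : Type*} [TopologicalSpace X] {μ : C(X, ℝ) → ℝ}

theorem mono_s16 (hμ : IsIPM X μ) {φ ψ : C(X, ℝ)} (h : φ ≤ ψ) : μ φ ≤ μ ψ :=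
  calc μ φ ≤ max (μ φ) (μ ψ) := le_max_left _ _
    _ = μ ψ := by rw [← hμ.2.2, sup_eq_right.mpr h]

theorem nonempty (hμ : IsIPM X μ) : Nonempty X := by
  by_contra hX
  have h01 : ContinuousMap.const X (0 : ℝ) = ContinuousMap.const X 1 := by
    ext x
    exact (hX ⟨x⟩).elim
  have h := congrArg μ h01
  rw [hμ.1, hμ.1] at h
  exact zero_ne_one h

theorem map {Y : Type*} [TopologicalSpace Y] (hμ : IsIPM X μ) (g : C(X, Y)) :
    IsIPM Y (IPMmap g μ) :=
  ⟨fun c => hμ.1 c, fun φ c => hμ.2.1 (φ.comp g) c, fun φ ψ => hμ.2.2 (φ.comp g) (ψ.comp g)⟩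

theorem lipschitzWith_one [CompactSpace X] (hμ : IsIPM X μ) : LipschitzWith 1 μ :=
  LipschitzWith.of_le_add fun φ ψ =>
    calc μ φ ≤ μ (ψ + ContinuousMap.const X (dist φ ψ)) :=
          hμ.mono_s16 <| ContinuousMap.le_def.2 fun x => by
            have := (le_abs_self _).trans_eq (Real.dist_eq (φ x) (ψ x)).symm
            simp only [ContinuousMap.add_apply, ContinuousMap.const_apply]
            linarith [ContinuousMap.dist_apply_le_dist (f := φ) (g := ψ) x]
      _ = μ ψ + dist φ ψ := hμ.2.1 _ _

theorem exists_forall_le_add [CompactSpace X] (hμ : IsIPM X μ) (φ : C(X, ℝ)) {ε : ℝ}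
    (hε : 0 < ε) : ∃ x, ∀ ψ : C(X, ℝ), μ φ ≤ μ ψ + (φ x - ψ x) + ε := by
  by_contra! h
  choose ψ hψ using h
  -- shifting each `ψ x` gives functions exceeding `φ` near `x` with `μ`-value below `μ φ`;
  -- finitely many of them cover `φ` from above, contradicting monotonicity
  set g : X → C(X, ℝ) := fun x => ψ x + ContinuousMap.const X (φ x - ψ x x + ε)
  have hg_lt : ∀ x, μ (g x) < μ φ := fun x => by
    simp only [g, hμ.2.1]
    linarith [hψ x]
  obtain ⟨t, ht⟩ := CompactSpace.elim_nhds_subcover (fun x => {y | φ y < g x y}) fun x =>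
    (isOpen_lt φ.continuous (g x).continuous).mem_nhds (by simp [g]; linarith)
  have hcover (y : X) : ∃ i ∈ t, φ y < g i y := by
    simpa using ht.ge (mem_univ y)
  have htne : t.Nonempty := by
    obtain ⟨y⟩ := hμ.nonempty
    obtain ⟨i, hi, -⟩ := hcover y
    exact ⟨i, hi⟩
  have hφ_le : φ ≤ t.sup' htne g := ContinuousMap.le_def.2 fun y => by
    obtain ⟨i, hi, hlt⟩ := hcover y
    rw [ContinuousMap.sup'_apply]
    exact hlt.le.trans (Finset.le_sup' (fun j => g j y) hi)
  obtain ⟨i, -, hi⟩ := Finset.exists_mem_eq_sup' htne (μ ∘ g)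
  have := (hμ.mono_s16 hφ_le).trans_eq ((Finset.apply_sup'_eq_sup'_comp htne μ hμ.2.2).trans hi)
  exact (hg_lt i).not_ge this

variable [CompactSpace X] [T2Space X]

theorem exists_mem_IPMsupp_forall_le_add (hμ : IsIPM X μ) (φ : C(X, ℝ)) {ε : ℝ}
    (hε : 0 < ε) : ∃ x ∈ IPMsupp μ, ∀ ψ : C(X, ℝ), μ φ ≤ μ ψ + (φ x - ψ x) + ε := by
  obtain ⟨x, hx⟩ := hμ.exists_forall_le_add φ hε
  exact ⟨x, mem_IPMsupp_of_forall_le (M := μ φ - φ x - ε) fun ψ hψ => by linarith [hx ψ], hx⟩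

theorem IPMsupp_nonempty (hμ : IsIPM X μ) : (IPMsupp μ).Nonempty :=
  let ⟨x, hx, _⟩ := hμ.exists_mem_IPMsupp_forall_le_add 0 one_pos
  ⟨x, hx⟩

theorem eq_of_restrict_IPMsupp_eq (hμ : IsIPM X μ) {φ ψ : C(X, ℝ)}
    (h : φ.restrict (IPMsupp μ) = ψ.restrict (IPMsupp μ)) : μ φ = μ ψ := by
  have key (φ ψ : C(X, ℝ)) (h : φ.restrict (IPMsupp μ) = ψ.restrict (IPMsupp μ)) :
      μ φ ≤ μ ψ := by
    refine le_of_forall_pos_le_add fun ε hε => ?_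
    obtain ⟨x, hx, hle⟩ := hμ.exists_mem_IPMsupp_forall_le_add φ hε
    have hφψ : φ x = ψ x := ContinuousMap.congr_fun h ⟨x, hx⟩
    linarith [hle ψ]
  exact (key φ ψ h).antisymm (key ψ φ h.symm)

theorem exists_isIPM_IPMsupp (hμ : IsIPM X μ) :
    ∃ σ : C(IPMsupp μ, ℝ) → ℝ, IsIPM (IPMsupp μ) σ ∧
      ∀ φ : C(X, ℝ), μ φ = σ (φ.restrict (IPMsupp μ)) := by
  choose E hE using fun g : C(IPMsupp μ, ℝ) => g.exists_restrict_eq (isClosed_IPMsupp μ)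
  refine ⟨fun g => μ (E g), ⟨fun c => ?_, fun g c => ?_, fun g h => ?_⟩,
    fun φ => hμ.eq_of_restrict_IPMsupp_eq (hE _).symm⟩
  · exact (hμ.eq_of_restrict_IPMsupp_eq (hE _)).trans (hμ.1 c)
  · refine (hμ.eq_of_restrict_IPMsupp_eq ?_).trans (hμ.2.1 (E g) c)
    rw [hE]
    exact congrArg (· + _) (hE g).symm
  · refine (hμ.eq_of_restrict_IPMsupp_eq ?_).trans (hμ.2.2 (E g) (E h))
    rw [hE]
    exact congrArg₂ (· ⊔ ·) (hE g).symm (hE h).symm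

end IsIPM

theorem IPMsupp_IPMmap_subset {X Y : Type*} [TopologicalSpace X] [CompactSpace X] [T2Space X]
    [TopologicalSpace Y] [T2Space Y] {μ : C(X, ℝ) → ℝ} (hμ : IsIPM X μ) (g : C(X, Y)) :
    IPMsupp (IPMmap g μ) ⊆ g '' IPMsupp μ := by
  obtain ⟨σ, hσ, hσμ⟩ := hμ.exists_isIPM_IPMsupp
  refine sInter_subset_of_mem ⟨((isClosed_IPMsupp μ).isCompact.image g.continuous).isClosed, ?_⟩
  let r : C(IPMsupp μ, g '' IPMsupp μ) :=
    ⟨fun x => ⟨g x, x.1, x.2, rfl⟩, by fun_prop⟩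
  exact ⟨fun φ => σ (φ.comp r), hσ.map r, fun φ => hσμ (φ.comp g)⟩

theorem IPMmap_prodMap_mem_AdmSet {X Y : Type*} [TopologicalSpace X] [TopologicalSpace Y]
    (f : C(X, Y)) {μ ν : C(X, ℝ) → ℝ} {ξ : C(X × X, ℝ) → ℝ} (hξ : ξ ∈ AdmSet μ ν) :
    IPMmap (f.prodMap f) ξ ∈ AdmSet (IPMmap f μ) (IPMmap f ν) := by
  obtain ⟨hξ, rfl, rfl⟩ := hξ
  exact ⟨hξ.map _, rfl, rfl⟩

/-- The tensor product `μ ⊗ ν`, `φ ↦ μ (x ↦ ν (φ (x, ·)))`; `ν` is bundled as a continuous map so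
that the inner function is continuous. -/
def IPMprod {X Y : Type*} [TopologicalSpace X] [TopologicalSpace Y] (μ : C(X, ℝ) → ℝ)
    (ν : C(C(Y, ℝ), ℝ)) : C(X × Y, ℝ) → ℝ :=
  fun φ => μ (ν.comp φ.curry)

section IPMprod

variable {X Y : Type*} [TopologicalSpace X] [TopologicalSpace Y] {μ : C(X, ℝ) → ℝ}
  {ν : C(C(Y, ℝ), ℝ)}

theorem IsIPM.prod (hμ : IsIPM X μ) (hν : IsIPM Y ν) : IsIPM (X × Y) (IPMprod μ ν) :=
  ⟨fun c => (congrArg μ (ContinuousMap.ext fun _ => hν.1 c)).trans (hμ.1 c),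
    fun φ c => (congrArg μ (ContinuousMap.ext fun x => hν.2.1 (φ.curry x) c)).trans
      (hμ.2.1 _ c),
    fun φ ψ => (congrArg μ (ContinuousMap.ext fun x => hν.2.2 (φ.curry x) (ψ.curry x))).trans
      (hμ.2.2 _ _)⟩

theorem IPMmap_fst_IPMprod (hν : IsIPM Y ν) : IPMmap ContinuousMap.fst (IPMprod μ ν) = μ :=
  funext fun φ => congrArg μ (ContinuousMap.ext fun x => hν.1 (φ x))

theorem IPMmap_snd_IPMprod (hμ : IsIPM X μ) : IPMmap ContinuousMap.snd (IPMprod μ ν) = ν :=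
  funext fun φ => hμ.1 (ν φ)

end IPMprod

theorem AdmSet_nonempty {X : Type*} [TopologicalSpace X] [CompactSpace X] {μ ν : C(X, ℝ) → ℝ}
    (hμ : IsIPM X μ) (hν : IsIPM X ν) : (AdmSet μ ν).Nonempty :=
  let ν' : C(C(X, ℝ), ℝ) := ⟨ν, hν.lipschitzWith_one.continuous⟩
  ⟨IPMprod μ ν', hμ.prod hν, IPMmap_fst_IPMprod hν, IPMmap_snd_IPMprod hμ⟩

section rhoID

variable {X : Type*} [TopologicalSpace X] {d : X → X → ℝ} {μ₁ μ₂ : C(X, ℝ) → ℝ}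

theorem rhoID_le_of_mem_AdmSet (hd : ∀ x y, 0 ≤ d x y) {ξ : C(X × X, ℝ) → ℝ}
    (hξ : ξ ∈ AdmSet μ₁ μ₂) : rhoID d μ₁ μ₂ ≤ sSup ((fun p : X × X => d p.1 p.2) '' IPMsupp ξ) :=
  csInf_le ⟨0, by
      rintro _ ⟨_, -, rfl⟩
      exact Real.sSup_nonneg (by rintro _ ⟨p, -, rfl⟩; exact hd _ _)⟩
    ⟨ξ, hξ, rfl⟩

theorem exists_mem_AdmSet_lt_of_rhoID_lt (hne : (AdmSet μ₁ μ₂).Nonempty) {r : ℝ}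
    (h : rhoID d μ₁ μ₂ < r) :
    ∃ ξ ∈ AdmSet μ₁ μ₂, sSup ((fun p : X × X => d p.1 p.2) '' IPMsupp ξ) < r := by
  obtain ⟨_, ⟨ξ, hξ, rfl⟩, hlt⟩ := exists_lt_of_csInf_lt (hne.image _) h
  exact ⟨ξ, hξ, hlt⟩

end rhoID

theorem rhoID_IPMmap_le {X Y : Type*} [TopologicalSpace X] [CompactSpace X] [T2Space X]
    [MetricSpace Y] (f : C(X, Y)) {μ ν : C(X, ℝ) → ℝ} {ξ : C(X × X, ℝ) → ℝ}
    (hξ : ξ ∈ AdmSet μ ν) :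
    rhoID (fun a b : Y => dist a b) (IPMmap f μ) (IPMmap f ν) ≤
      sSup ((fun p : X × X => dist (f p.1) (f p.2)) '' IPMsupp ξ) := by
  have hbdd := (isClosed_IPMsupp ξ).isCompact.bddAbove_image
    (f := fun p : X × X => dist (f p.1) (f p.2)) (by fun_prop)
  refine (rhoID_le_of_mem_AdmSet (fun _ _ => dist_nonneg) (IPMmap_prodMap_mem_AdmSet f hξ)).trans
    (Real.sSup_le ?_ (Real.sSup_nonneg ?_))
  · rintro _ ⟨q, hq, rfl⟩
    obtain ⟨p, hp, rfl⟩ := IPMsupp_IPMmap_subset hξ.1 (f.prodMap f) hq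
    exact le_csSup hbdd ⟨p, hp, rfl⟩
  · rintro _ ⟨p, -, rfl⟩
    exact dist_nonneg

theorem rhoID_IPMmap_lt {X Y : Type*} [MetricSpace X] [CompactSpace X] [MetricSpace Y]
    (f : C(X, Y)) {ε δ : ℝ} (hf : ∀ x y : X, dist x y < δ → dist (f x) (f y) < ε)
    {μ ν : C(X, ℝ) → ℝ} (hμ : IsIPM X μ) (hν : IsIPM X ν)
    (h : rhoID (fun x y : X => dist x y) μ ν < δ) :
    rhoID (fun a b : Y => dist a b) (IPMmap f μ) (IPMmap f ν) < ε := by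
  obtain ⟨ξ, hξ, hlt⟩ := exists_mem_AdmSet_lt_of_rhoID_lt (AdmSet_nonempty hμ hν) h
  have hK := (isClosed_IPMsupp ξ).isCompact
  have hne := hξ.1.IPMsupp_nonempty
  refine (rhoID_IPMmap_le f hξ).trans_lt ((hK.sSup_lt_iff_of_continuous hne (by fun_prop) ε).2
    fun p hp => hf _ _ ?_)
  exact (hK.sSup_lt_iff_of_continuous hne (by fun_prop) δ).1 hlt p hp

theorem rhoI_map_estimate_general {X Y : Type*} [MetricSpace X] [CompactSpace X]
    [MetricSpace Y] (f : C(X, Y)) :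
    (∀ (μ ν : C(X, ℝ) → ℝ), IsIPM X μ → IsIPM X ν →
      ∀ lam ∈ AdmSet μ ν,
        rhoID (fun x y : X => dist x y) μ ν =
          sSup ((fun p : X × X => dist p.1 p.2) '' IPMsupp lam) →
        rhoID (fun a b : Y => dist a b) (IPMmap f μ) (IPMmap f ν) ≤
          sSup ((fun p : X × X => dist (f p.1) (f p.2)) '' IPMsupp lam)) ∧
    (∀ ε δ : ℝ, (∀ x y : X, dist x y < δ → dist (f x) (f y) < ε) →
      ∀ μ ν : C(X, ℝ) → ℝ, IsIPM X μ → IsIPM X ν →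
        rhoID (fun x y : X => dist x y) μ ν < δ →
        rhoID (fun a b : Y => dist a b) (IPMmap f μ) (IPMmap f ν) < ε) :=
  ⟨fun _ _ _ _ _ hlam _ => rhoID_IPMmap_le f hlam,
    fun _ _ hf _ _ hμ hν h => rhoID_IPMmap_lt f hf hμ hν h⟩

/-- For continuous `f : X → Y` and an optimal admissible measure `lam` for `(μ, ν)`,
`ρ_I(I(f)μ, I(f)ν) ≤ sup { ρ_Y(f x, f y) : (x,y) ∈ supp lam }`; consequently, if `f` is
`(ε, δ)`-uniformly continuous then so is `I(f)`. -/
theorem rhoI_map_estimate {X Y : Type*} [MetricSpace X] [CompactSpace X]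
    [MetricSpace Y] [CompactSpace Y] (f : C(X, Y)) :
    (∀ (μ ν : C(X, ℝ) → ℝ), IsIPM X μ → IsIPM X ν →
      ∀ lam ∈ AdmSet μ ν,
        rhoID (fun x y : X => dist x y) μ ν =
          sSup ((fun p : X × X => dist p.1 p.2) '' IPMsupp lam) →
        rhoID (fun a b : Y => dist a b) (IPMmap f μ) (IPMmap f ν) ≤
          sSup ((fun p : X × X => dist (f p.1) (f p.2)) '' IPMsupp lam)) ∧
    (∀ ε δ : ℝ, (∀ x y : X, dist x y < δ → dist (f x) (f y) < ε) →
      ∀ μ ν : C(X, ℝ) → ℝ, IsIPM X μ → IsIPM X ν →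
        rhoID (fun x y : X => dist x y) μ ν < δ →
        rhoID (fun a b : Y => dist a b) (IPMmap f μ) (IPMmap f ν) < ε) :=
  rhoI_map_estimate_general f
end
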